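/- arXiv:1409.2536 — 2 statements merged into one kernel-verified Lean document; each statement's English description precedes it below -/
import Mathlib

section
/- For every density operator ρ on ℂ^d, every positive integer n and every δ ≥ 0, writing Π^n = Π^n_{ρ,δ}, the operator inequalities Π^n · exp₂(−nH(ρ) − K·d·δ·√n) ≤ Π^n ρ^{⊗n} Π^n ≤ Π^n · exp₂(−nH(ρ) + K·d·δ·√n) hold (in the positive semidefinite order), where K = 2 log₂(e)/e and H(ρ) = −Tr(ρ log₂ ρ) is the von Neumann entropy. -/
open Matrix BigOperators Finset
open scoped Classical ComplexOrder

noncomputable section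

/-- Square complex matrices of size `d` (operators on `ℂ^d`). -/
abbrev Mat (d : ℕ) := Matrix (Fin d) (Fin d) ℂ

/-- Operators on the `n`-fold tensor power `(ℂ^d)^{⊗n}`, indexed by `Fin n → Fin d`. -/
abbrev MatPow (d n : ℕ) := Matrix (Fin n → Fin d) (Fin n → Fin d) ℂ

/-- Tensor product `A 0 ⊗ A 1 ⊗ ⋯ ⊗ A (n-1)` of a family of `d × d` matrices. -/
def tensorPow {d n : ℕ} (A : Fin n → Mat d) : MatPow d n :=
  Matrix.of fun j k => ∏ i, A i (j i) (k i)

/-- Exponential to base 2. -/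
def exp2 (t : ℝ) : ℝ := (2 : ℝ) ^ t

/-- `P` is a probability distribution on the finite set `X`. -/
def IsProbDist {X : Type*} [Fintype X] (P : X → ℝ) : Prop :=
  (∀ x, 0 ≤ P x) ∧ ∑ x, P x = 1

/-- `ρ` is a density operator (a state): positive semidefinite with trace one. -/
def IsState {ι : Type*} [Fintype ι] [DecidableEq ι] (ρ : Matrix ι ι ℂ) : Prop :=
  ρ.PosSemidef ∧ ρ.trace = 1

/-- `N(x|x^n)`: number of occurrences of the letter `x` in the sequence `xs`. -/
def countIn {X : Type*} {n : ℕ} (x : X) (xs : Fin n → X) : ℕ :=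
  (Finset.univ.filter fun i => xs i = x).card

/-- The variance-typical set `T^n_{P,δ}`. -/
def typicalSet {X : Type*} [Fintype X] (n : ℕ) (P : X → ℝ) (δ : ℝ) :
    Finset (Fin n → X) :=
  Finset.univ.filter fun xs => ∀ x : X,
    |(countIn x xs : ℝ) - n * P x| ≤ δ * Real.sqrt n * Real.sqrt (P x * (1 - P x))

/-- Product (i.i.d.) probability `P^{⊗n}(A)` of a set `A` of sequences. -/
def prodProb {X : Type*} [Fintype X] {n : ℕ} (P : X → ℝ) (A : Finset (Fin n → X)) : ℝ :=
  ∑ xs ∈ A, ∏ i, P (xs i)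

/-- Shannon entropy to base 2. -/
def shannonEntropy {X : Type*} [Fintype X] (P : X → ℝ) : ℝ :=
  -∑ x, P x * Real.logb 2 (P x)

/-- von Neumann entropy to base 2, `H(ρ) = -Tr(ρ log₂ ρ)`, via the eigenvalues. -/
def vnEntropy {d : ℕ} (ρ : Mat d) : ℝ :=
  if h : ρ.IsHermitian then -∑ i, h.eigenvalues i * Real.logb 2 (h.eigenvalues i) else 0

/-- The constant `K = 2 log₂(e) / e`. -/
def Kconst : ℝ := 2 * Real.logb 2 (Real.exp 1) / Real.exp 1

/-- A diagonalization `ρ = Σ_j R j • π j` into one-dimensional mutually orthogonal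
eigenprojectors, with eigenvalue list `R` a probability distribution. -/
def IsDiagonalization {d : ℕ} (ρ : Mat d) (R : Fin d → ℝ) (π : Fin d → Mat d) : Prop :=
  (∀ j, (π j).PosSemidef) ∧ (∀ j, π j * π j = π j) ∧ (∀ j, (π j).trace = 1) ∧
    (∀ j k, j ≠ k → π j * π k = 0) ∧ (∑ j, π j = 1) ∧
    ρ = ∑ j, (R j : ℂ) • π j ∧ IsProbDist R

/-- The variance-typical projector `Π^n_{ρ,δ}` of a state with fixed diagonalization
`(R, π)`. -/
def typicalProj {d : ℕ} (n : ℕ) (R : Fin d → ℝ) (π : Fin d → Mat d) (δ : ℝ) : MatPow d n :=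
  ∑ js ∈ typicalSet n R δ, tensorPow fun i => π (js i)

/-- `B` is an `η`-shadow of the state `σ`: `0 ≤ B ≤ 1` and `Tr(σB) ≥ η`. -/
def IsShadow {ι : Type*} [Fintype ι] [DecidableEq ι] (σ B : Matrix ι ι ℂ) (η : ℝ) : Prop :=
  B.PosSemidef ∧ ((1 : Matrix ι ι ℂ) - B).PosSemidef ∧ η ≤ (Matrix.trace (σ * B)).re

/-- Average state `PW = Σ_x P(x) W_x` of a cq-channel under input distribution `P`. -/
def avgState {X : Type*} [Fintype X] {d : ℕ} (P : X → ℝ) (W : X → Mat d) : Mat d :=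
  ∑ x, (P x : ℂ) • W x

/-- Conditional von Neumann entropy `H(W|P) = Σ_x P(x) H(W_x)`. -/
def condEntropy {X : Type*} [Fintype X] {d : ℕ} (P : X → ℝ) (W : X → Mat d) : ℝ :=
  ∑ x, P x * vnEntropy (W x)

/-- Mutual information `I(P;W) = H(PW) − H(W|P)`. -/
def mutualInfo {X : Type*} [Fintype X] {d : ℕ} (P : X → ℝ) (W : X → Mat d) : ℝ :=
  vnEntropy (avgState P W) - condEntropy P W

/-- Capacity `C(W) = max_P I(P;W)`. -/
def capacity {X : Type*} [Fintype X] {d : ℕ} (W : X → Mat d) : ℝ :=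
  sSup {c | ∃ P : X → ℝ, IsProbDist P ∧ c = mutualInfo P W}

/-- `(f, D)` (with message set `M` inside the outcome index set `M'`) is an
`(n,λ)`-code for the cq-channel `W`: the `D m` are positive semidefinite, sum to the
identity, and each message is decoded correctly with probability at least `1 - λ`. -/
def IsCode {X : Type*} [Fintype X] {d n : ℕ} (W : X → Mat d) (lam : ℝ)
    {M' : Type*} [Fintype M'] (M : Finset M') (f : M' → Fin n → X)
    (D : M' → MatPow d n) : Prop :=
  (∀ m, (D m).PosSemidef) ∧ (∑ m, D m = 1) ∧
    ∀ m ∈ M, 1 - lam ≤ (Matrix.trace (tensorPow (fun i => W (f m i)) * D m)).re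

/-- `N(n,λ)`: maximal size of an `(n,λ)`-code for `W`. -/
def maxCodeSize {X : Type*} [Fintype X] (d : ℕ) (W : X → Mat d) (n : ℕ) (lam : ℝ) : ℕ :=
  sSup {k | ∃ (M' : Type) (_ : Fintype M') (M : Finset M') (f : M' → Fin n → X)
    (D : M' → MatPow d n), IsCode W lam M f D ∧ M.card = k}

/-- Trace norm `‖A‖₁ = Tr|A|`: the sum of the singular values. -/
def traceNorm {ι : Type*} [Fintype ι] [DecidableEq ι] (A : Matrix ι ι ℂ) : ℝ :=
  ∑ i, Real.sqrt ((Matrix.posSemidef_conjTranspose_mul_self A).1.eigenvalues i)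

/-- Trace distance `D(ρ,σ) = ½‖ρ−σ‖₁`. -/
def traceDist {ι : Type*} [Fintype ι] [DecidableEq ι] (ρ σ : Matrix ι ι ℂ) : ℝ :=
  traceNorm (ρ - σ) / 2

/-- (Pure-state) fidelity `F(ρ,σ) = Tr(ρσ)`. -/
def fidelity {ι : Type*} [Fintype ι] [DecidableEq ι] (ρ σ : Matrix ι ι ℂ) : ℝ :=
  (Matrix.trace (ρ * σ)).re

/-- A pure state: the rank-one orthogonal projector `|ψ⟩⟨ψ|` onto the span of a
unit vector `ψ`. -/
def IsPureState {ι : Type*} [Fintype ι] (ρ : Matrix ι ι ℂ) : Prop :=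
  ∃ ψ : ι → ℂ, (∑ i, star (ψ i) * ψ i) = 1 ∧ ρ = Matrix.vecMulVec ψ (star ψ)

/-- The set of eigenvalue-index sequences `js` that are variance-typical, with
constant `δ`, for the distribution `q x` on each block `I_x = {i : xs i = x}`. -/
def condTypicalSet {X : Type*} [Fintype X] {n d : ℕ} (xs : Fin n → X)
    (q : X → Fin d → ℝ) (δ : ℝ) : Finset (Fin n → Fin d) :=
  Finset.univ.filter fun js => ∀ (x : X) (k : Fin d),
    |((Finset.univ.filter fun i => xs i = x ∧ js i = k).card : ℝ) - (countIn x xs : ℝ) * q x k|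
      ≤ δ * Real.sqrt (countIn x xs) * Real.sqrt (q x k * (1 - q x k))

/-- Conditional variance-typical projector `Π^n_{W,δ}(x^n) = ⊗_{x∈X} Π^{I_x}_{W_x,δ}`,
with respect to fixed diagonalizations `W_x = Σ_j (q x j) • (π x j)`. -/
def condTypicalProj {X : Type*} [Fintype X] {d : ℕ} {n : ℕ} (xs : Fin n → X)
    (q : X → Fin d → ℝ) (π : X → Fin d → Mat d) (δ : ℝ) : MatPow d n :=
  ∑ js ∈ condTypicalSet xs q δ, tensorPow fun i => π (xs i) (js i)

/-!
In the product eigenbasis `π j₁ ⊗ ⋯ ⊗ π jₙ` both `Π^n` and `ρ^{⊗n}` are diagonal, so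
`Π^n ρ^{⊗n} Π^n = ∑_{jⁿ ∈ T} R(j₁)⋯R(jₙ) · π j₁ ⊗ ⋯ ⊗ π jₙ` and it suffices to bound the
eigenvalues `R(j₁)⋯R(jₙ) = exp₂ (∑ⱼ N(j|jⁿ) log₂ R(j))` of typical sequences. The exponent differs
from `-n H(R)` by `∑ⱼ (N(j|jⁿ) - n R(j)) log₂ R(j)`, whose `j`-th term is at most
`δ √n √(R(j)(1 - R(j))) |log₂ R(j)| ≤ K δ √n` in absolute value, because `√p (-ln p) ≤ 2/e`.
Finally `H(ρ) = H(R)`: writing `π j = v_j v_jᴴ` with orthonormal `v_j` shows that `ρ` has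
characteristic polynomial `∏ⱼ (X - R(j))`.
-/

theorem sum_mul_sum_smul_mul_sum_of_orthogonal {κ 𝕜 A : Type*} [Fintype κ] [DecidableEq κ]
    [CommSemiring 𝕜] [Semiring A] [Algebra 𝕜 A] {P : κ → A}
    (hP : ∀ a b, P a * P b = if a = b then P a else 0) (S : Finset κ) (c : κ → 𝕜) :
    (∑ a ∈ S, P a) * (∑ b, c b • P b) * (∑ a ∈ S, P a) = ∑ b ∈ S, c b • P b := by
  have hleft (b : κ) : (∑ a ∈ S, P a) * P b = if b ∈ S then P b else 0 := by
    simp [Finset.sum_mul, hP]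
  have hright (b : κ) : P b * (∑ a ∈ S, P a) = if b ∈ S then P b else 0 := by
    simp [Finset.mul_sum, hP]
  have hcompress : (∑ a ∈ S, P a) * (∑ b, c b • P b) = ∑ b ∈ S, c b • P b := by
    simp [Finset.mul_sum, hleft]
  rw [hcompress, Finset.sum_mul]
  exact Finset.sum_congr rfl fun b hb => by rw [smul_mul_assoc, hright, if_pos hb]

section TensorPow

variable {d n : ℕ}

theorem tensorPow_mul (A B : Fin n → Mat d) :
    tensorPow A * tensorPow B = tensorPow fun i => A i * B i := by
  ext j k
  simp only [tensorPow, Matrix.mul_apply, Matrix.of_apply, Finset.prod_univ_sum,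
    Fintype.piFinset_univ, Finset.prod_mul_distrib]

theorem tensorPow_conjTranspose (A : Fin n → Mat d) :
    (tensorPow A)ᴴ = tensorPow fun i => (A i)ᴴ := by
  ext j k
  simp [tensorPow, star_prod]

theorem tensorPow_eq_zero {A : Fin n → Mat d} {i : Fin n} (h : A i = 0) : tensorPow A = 0 := by
  ext j k
  exact Finset.prod_eq_zero (Finset.mem_univ i) (by simp [h])

theorem tensorPow_sum_smul (c : Fin d → ℂ) (π : Fin d → Mat d) :
    tensorPow (fun _ : Fin n => ∑ j, c j • π j) =
      ∑ js : Fin n → Fin d, (∏ i, c (js i)) • tensorPow fun i => π (js i) := by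
  ext j k
  simp only [tensorPow, Matrix.of_apply, Matrix.sum_apply, Matrix.smul_apply, smul_eq_mul,
    Finset.prod_univ_sum, Fintype.piFinset_univ, Finset.prod_mul_distrib]

theorem tensorPow_mul_tensorPow_of_orthogonal {π : Fin d → Mat d}
    (hπ : ∀ j k, π j * π k = if j = k then π j else 0) (a b : Fin n → Fin d) :
    (tensorPow fun i => π (a i)) * (tensorPow fun i => π (b i)) =
      if a = b then tensorPow fun i => π (a i) else 0 := by
  rw [tensorPow_mul]
  split_ifs with hab
  · subst hab
    simp [hπ]
  · obtain ⟨i, hi⟩ := Function.ne_iff.mp hab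
    exact tensorPow_eq_zero (i := i) (by simp [hπ, hi])

theorem posSemidef_tensorPow {π : Fin d → Mat d} (hherm : ∀ j, (π j).IsHermitian)
    (hidem : ∀ j, π j * π j = π j) (js : Fin n → Fin d) :
    (tensorPow fun i => π (js i)).PosSemidef := by
  have hP : (tensorPow fun i => π (js i)) =
      (tensorPow fun i => π (js i))ᴴ * (tensorPow fun i => π (js i)) := by
    simp [tensorPow_conjTranspose, tensorPow_mul, (hherm _).eq, hidem]
  rw [hP]
  exact Matrix.posSemidef_conjTranspose_mul_self _

end TensorPow

theorem typicalProj_mul_tensorPow_mul_typicalProj {d n : ℕ} {π : Fin d → Mat d}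
    (hπ : ∀ j k, π j * π k = if j = k then π j else 0) (R : Fin d → ℝ) (δ : ℝ) (c : Fin d → ℂ) :
    typicalProj n R π δ * tensorPow (fun _ : Fin n => ∑ j, c j • π j) * typicalProj n R π δ =
      ∑ js ∈ typicalSet n R δ, (∏ i, c (js i)) • tensorPow fun i => π (js i) := by
  rw [tensorPow_sum_smul, typicalProj]
  exact sum_mul_sum_smul_mul_sum_of_orthogonal (tensorPow_mul_tensorPow_of_orthogonal hπ) _ _

section RankOne

variable {ι : Type*} [Fintype ι]

theorem Matrix.IsHermitian.eq_vecMulVec_of_mulVec_eq {P : Matrix ι ι ℂ} (hP : P.IsHermitian)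
    (hidem : P * P = P) (htr : P.trace = 1) {v : ι → ℂ} (hv : star v ⬝ᵥ v = 1)
    (hPv : P *ᵥ v = v) : P = vecMulVec v (star v) := by
  set W := vecMulVec v (star v)
  have hvP : star v ᵥ* P = star v := by
    rw [← hP.eq, ← Matrix.star_mulVec, hPv]
  have hPW : P * W = W := by rw [Matrix.mul_vecMulVec, hPv]
  have hWP : W * P = W := by rw [Matrix.vecMulVec_mul, hvP]
  have hWW : W * W = W := by rw [Matrix.vecMulVec_mul_vecMulVec, hv, one_smul]
  have hQ : (P - W).PosSemidef := by
    have hQherm : (P - W)ᴴ = P - W := by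
      rw [Matrix.conjTranspose_sub, hP.eq, Matrix.conjTranspose_vecMulVec, star_star]
    have hQidem : (P - W) * (P - W) = P - W := by
      rw [sub_mul, mul_sub, mul_sub, hidem, hPW, hWP, hWW, sub_self, sub_zero]
    simpa only [hQherm, hQidem] using Matrix.posSemidef_conjTranspose_mul_self (P - W)
  have htrQ : (P - W).trace = 0 := by
    rw [Matrix.trace_sub, htr, Matrix.trace_vecMulVec, dotProduct_comm, hv, sub_self]
  exact sub_eq_zero.mp (hQ.trace_eq_zero_iff.mp htrQ)

theorem Matrix.IsHermitian.exists_eq_vecMulVec {P : Matrix ι ι ℂ} (hP : P.IsHermitian)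
    (hidem : P * P = P) (htr : P.trace = 1) : ∃ v : ι → ℂ, P = vecMulVec v (star v) := by
  obtain ⟨k, -, hk⟩ : ∃ k ∈ Finset.univ, P k k ≠ 0 :=
    Finset.exists_ne_zero_of_sum_ne_zero fun h => one_ne_zero (htr.symm.trans h)
  set u : ι → ℂ := P *ᵥ Pi.single k 1
  have hPu : P *ᵥ u = u := by rw [Matrix.mulVec_mulVec, hidem]
  have huu : star u ⬝ᵥ u = P k k := by
    rw [Matrix.star_mulVec, hP.eq, Matrix.dotProduct_mulVec, Matrix.vecMul_vecMul, hidem]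
    simp
  obtain ⟨hre, him⟩ := Complex.pos_iff.mp <|
    (huu ▸ dotProduct_star_self_nonneg u).lt_of_ne' hk
  set s := (P k k).re
  have hs : P k k = s := Complex.ext rfl (by simp [him])
  refine ⟨(√s)⁻¹ • u, hP.eq_vecMulVec_of_mulVec_eq hidem htr ?_ (by rw [Matrix.mulVec_smul, hPu])⟩
  rw [star_smul, star_trivial, smul_dotProduct, dotProduct_smul, huu, hs, smul_smul,
    ← Complex.coe_smul, smul_eq_mul, ← mul_inv, Real.mul_self_sqrt hre.le, Complex.ofReal_inv,
    inv_mul_cancel₀ (Complex.ofReal_ne_zero.mpr hre.ne')]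

end RankOne

theorem IsDiagonalization.mul_eq_ite {d : ℕ} {ρ : Mat d} {R : Fin d → ℝ} {π : Fin d → Mat d}
    (h : IsDiagonalization ρ R π) (j k : Fin d) : π j * π k = if j = k then π j else 0 := by
  split_ifs with hjk
  · exact hjk ▸ h.2.1 j
  · exact h.2.2.2.1 j k hjk

theorem exists_orthonormal_of_orthogonal_projections {ι κ : Type*} [Fintype ι] [DecidableEq κ]
    {π : κ → Matrix ι ι ℂ} (hherm : ∀ j, (π j).IsHermitian)
    (hπ : ∀ j k, π j * π k = if j = k then π j else 0) (htr : ∀ j, (π j).trace = 1) :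
    ∃ v : κ → ι → ℂ, (∀ j, π j = vecMulVec (v j) (star (v j))) ∧
      ∀ j k, star (v j) ⬝ᵥ v k = if j = k then 1 else 0 := by
  choose v hv using fun j => (hherm j).exists_eq_vecMulVec (by simpa using hπ j j) (htr j)
  have hnorm (j : κ) : star (v j) ⬝ᵥ v j = 1 := by
    rw [← htr j, hv j, Matrix.trace_vecMulVec, dotProduct_comm]
  refine ⟨v, hv, fun j k => ?_⟩
  split_ifs with hjk
  · exact hjk ▸ hnorm j
  have hzero := hπ j k
  rw [if_neg hjk, hv j, hv k, Matrix.vecMulVec_mul_vecMulVec, Matrix.vecMulVec_eq_zero,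
    smul_eq_zero, star_eq_zero] at hzero
  have hne (i : κ) : v i ≠ 0 := fun h0 => by simpa [h0] using hnorm i
  exact (hzero.resolve_left (hne j)).resolve_right (hne k)

section Spectrum

open Polynomial

theorem Matrix.charpoly_sum_smul_vecMulVec {ι R : Type*} [Fintype ι] [DecidableEq ι] [CommRing R]
    [StarRing R] {v : ι → ι → R} (hv : ∀ j k, star (v j) ⬝ᵥ v k = if j = k then 1 else 0)
    (c : ι → R) : (∑ j, c j • vecMulVec (v j) (star (v j))).charpoly = ∏ j, (X - C (c j)) := by
  set V : Matrix ι ι R := (Matrix.of v)ᵀ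
  have hVV : Vᴴ * V = 1 := by
    ext j k
    simpa [V, Matrix.mul_apply, dotProduct, Matrix.one_apply] using hv j k
  have hsum : ∑ j, c j • vecMulVec (v j) (star (v j)) = V * (diagonal c * Vᴴ) := by
    ext a b
    simp [V, Matrix.mul_apply, vecMulVec_apply, Matrix.sum_apply, Matrix.diagonal_apply,
      mul_left_comm]
  rw [hsum, Matrix.charpoly_mul_comm, Matrix.mul_assoc, hVV, Matrix.mul_one,
    Matrix.charpoly_diagonal]

theorem Matrix.IsHermitian.sum_comp_eigenvalues_of_charpoly_eq {𝕜 n ι : Type*} [RCLike 𝕜]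
    [Fintype n] [DecidableEq n] [Fintype ι] {A : Matrix n n 𝕜} (hA : A.IsHermitian) {c : ι → ℝ}
    (hc : A.charpoly = ∏ j, (X - C (c j : 𝕜))) (f : ℝ → ℝ) :
    ∑ i, f (hA.eigenvalues i) = ∑ j, f (c j) := by
  have hroots : Finset.univ.val.map hA.eigenvalues = Finset.univ.val.map c := by
    apply Multiset.map_injective (RCLike.ofReal_injective (K := 𝕜))
    rw [Multiset.map_map, Multiset.map_map, ← hA.roots_charpoly_eq_eigenvalues, hc,
      Polynomial.roots_prod _ _ (by simp [Finset.prod_ne_zero_iff, X_sub_C_ne_zero])]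
    simp
  simpa only [Finset.sum_eq_multiset_sum, Multiset.map_map, Function.comp_def] using
    congrArg (fun s => (s.map f).sum) hroots

theorem vnEntropy_eq_shannonEntropy {d : ℕ} {ρ : Mat d} {R : Fin d → ℝ} {π : Fin d → Mat d}
    (h : IsDiagonalization ρ R π) : vnEntropy ρ = shannonEntropy R := by
  obtain ⟨v, hπv, hv⟩ :=
    exists_orthonormal_of_orthogonal_projections (fun j => (h.1 j).1) h.mul_eq_ite h.2.2.1
  obtain ⟨hpsd, -, -, -, -, hρ, -⟩ := h
  have hherm : ρ.IsHermitian := by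
    rw [hρ]
    exact isSelfAdjoint_sum _ fun j _ => (hpsd j).1.smul (Complex.conj_ofReal (R j))
  have hcharpoly : ρ.charpoly = ∏ j, (X - C (R j : ℂ)) := by
    simp_rw [hρ, hπv]
    exact Matrix.charpoly_sum_smul_vecMulVec hv _
  rw [vnEntropy, dif_pos hherm, shannonEntropy,
    hherm.sum_comp_eigenvalues_of_charpoly_eq hcharpoly (fun x => x * Real.logb 2 x)]

end Spectrum

theorem Real.sqrt_mul_neg_log_le (p : ℝ) : √p * -Real.log p ≤ 2 / Real.exp 1 := by
  rcases le_or_gt p 0 with hp | hp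
  · rw [Real.sqrt_eq_zero'.mpr hp, zero_mul]
    positivity
  have hlog : Real.log (√p)⁻¹ ≤ (√p)⁻¹ / Real.exp 1 := by
    have h := Real.log_le_sub_one_of_pos (x := (√p)⁻¹ / Real.exp 1) (by positivity)
    rw [Real.log_div (by positivity) (Real.exp_ne_zero 1), Real.log_exp] at h
    linarith
  calc √p * -Real.log p = 2 * (√p * Real.log (√p)⁻¹) := by
        rw [Real.log_inv, Real.log_sqrt hp.le]
        ring
    _ ≤ 2 * (√p * ((√p)⁻¹ / Real.exp 1)) := by gcongr
    _ = 2 / Real.exp 1 := by field_simp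

theorem sqrt_mul_one_sub_mul_abs_logb_le_Kconst {p : ℝ} (h0 : 0 ≤ p) (h1 : p ≤ 1) :
    √(p * (1 - p)) * |Real.logb 2 p| ≤ Kconst := by
  have hlog2 : 0 < Real.log 2 := Real.log_pos one_lt_two
  have hK : Kconst = 2 / Real.exp 1 / Real.log 2 := by
    rw [Kconst, Real.logb, Real.log_exp]
    field_simp
  rw [abs_of_nonpos (Real.logb_nonpos one_lt_two h0 h1), Real.logb, hK, ← neg_div, ← mul_div_assoc]
  gcongr
  calc √(p * (1 - p)) * -Real.log p ≤ √p * -Real.log p := by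
        gcongr
        · exact neg_nonneg.mpr (Real.log_nonpos h0 h1)
        · nlinarith
    _ ≤ 2 / Real.exp 1 := Real.sqrt_mul_neg_log_le p

theorem exp2_monotone : Monotone exp2 := fun _ _ h =>
  Real.rpow_le_rpow_of_exponent_le one_le_two h

section Typical

variable {X : Type*} [Fintype X] {n : ℕ}

theorem prod_comp_eq_prod_pow_countIn {M : Type*} [CommMonoid M] (f : X → M) (xs : Fin n → X) :
    ∏ i, f (xs i) = ∏ x, f x ^ countIn x xs := by
  rw [← Finset.prod_fiberwise Finset.univ xs (fun i => f (xs i))]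
  refine Finset.prod_congr rfl fun x _ => ?_
  rw [Finset.prod_congr rfl fun i hi => by rw [(Finset.mem_filter.mp hi).2], Finset.prod_const]
  rfl

theorem countIn_eq_zero_of_mem_typicalSet {P : X → ℝ} {δ : ℝ} {xs : Fin n → X}
    (hxs : xs ∈ typicalSet n P δ) {x : X} (hx : P x = 0) : countIn x xs = 0 := by
  simpa [hx] using (Finset.mem_filter.mp hxs).2 x

theorem prod_eq_exp2_of_mem_typicalSet {P : X → ℝ} (hP : ∀ x, 0 ≤ P x) {δ : ℝ}
    {xs : Fin n → X} (hxs : xs ∈ typicalSet n P δ) :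
    ∏ i, P (xs i) = exp2 (∑ x, countIn x xs * Real.logb 2 (P x)) := by
  rw [prod_comp_eq_prod_pow_countIn, exp2, Real.rpow_sum_of_pos two_pos]
  refine Finset.prod_congr rfl fun x _ => ?_
  rcases (hP x).eq_or_lt with hx | hx
  · simp [countIn_eq_zero_of_mem_typicalSet hxs hx.symm]
  · rw [mul_comm, Real.rpow_mul_natCast zero_le_two, Real.rpow_logb two_pos one_lt_two.ne' hx]

theorem abs_sum_countIn_sub_mul_logb_le {P : X → ℝ} (hP : IsProbDist P) {δ : ℝ} (hδ : 0 ≤ δ)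
    {xs : Fin n → X} (hxs : xs ∈ typicalSet n P δ) :
    |∑ x, ((countIn x xs : ℝ) - n * P x) * Real.logb 2 (P x)| ≤
      Kconst * Fintype.card X * δ * √n := by
  have hP1 (x : X) : P x ≤ 1 := by
    rw [← hP.2]
    exact Finset.single_le_sum (fun y _ => hP.1 y) (Finset.mem_univ x)
  calc |∑ x, ((countIn x xs : ℝ) - n * P x) * Real.logb 2 (P x)|
      ≤ ∑ x, |(countIn x xs : ℝ) - n * P x| * |Real.logb 2 (P x)| := by
        simpa only [abs_mul] using Finset.abs_sum_le_sum_abs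
          (fun x => ((countIn x xs : ℝ) - n * P x) * Real.logb 2 (P x)) Finset.univ
    _ ≤ ∑ x, δ * √n * √(P x * (1 - P x)) * |Real.logb 2 (P x)| := by
        gcongr with x
        exact (Finset.mem_filter.mp hxs).2 x
    _ ≤ ∑ _x : X, δ * √n * Kconst := by
        refine Finset.sum_le_sum fun x _ => ?_
        rw [mul_assoc]
        exact mul_le_mul_of_nonneg_left
          (sqrt_mul_one_sub_mul_abs_logb_le_Kconst (hP.1 x) (hP1 x)) (by positivity)
    _ = Kconst * Fintype.card X * δ * √n := by
        rw [Finset.sum_const, Finset.card_univ, nsmul_eq_mul]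
        ring

theorem prod_mem_Icc_of_mem_typicalSet {P : X → ℝ} (hP : IsProbDist P) {δ : ℝ} (hδ : 0 ≤ δ)
    {xs : Fin n → X} (hxs : xs ∈ typicalSet n P δ) :
    ∏ i, P (xs i) ∈ Set.Icc
      (exp2 (-(n * shannonEntropy P) - Kconst * Fintype.card X * δ * √n))
      (exp2 (-(n * shannonEntropy P) + Kconst * Fintype.card X * δ * √n)) := by
  have hsplit : ∑ x, countIn x xs * Real.logb 2 (P x) =
      -(n * shannonEntropy P) + ∑ x, ((countIn x xs : ℝ) - n * P x) * Real.logb 2 (P x) := by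
    simp only [shannonEntropy, sub_mul, Finset.sum_sub_distrib, mul_assoc, ← Finset.mul_sum]
    ring
  have hdev := abs_le.mp (abs_sum_countIn_sub_mul_logb_le hP hδ hxs)
  rw [prod_eq_exp2_of_mem_typicalSet hP.1 hxs, hsplit]
  exact ⟨exp2_monotone (by linarith), exp2_monotone (by linarith)⟩

end Typical

theorem typicalProj_sandwich_general {d : ℕ} (ρ : Mat d)
    (R : Fin d → ℝ) (π : Fin d → Mat d) (hdiag : IsDiagonalization ρ R π)
    (n : ℕ) (δ : ℝ) (hδ : 0 ≤ δ) :
    (typicalProj n R π δ * tensorPow (fun _ : Fin n => ρ) * typicalProj n R π δ -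
        ((exp2 (-((n : ℝ) * vnEntropy ρ) - Kconst * d * δ * Real.sqrt n) : ℝ) : ℂ) •
          typicalProj n R π δ).PosSemidef ∧
      (((exp2 (-((n : ℝ) * vnEntropy ρ) + Kconst * d * δ * Real.sqrt n) : ℝ) : ℂ) •
          typicalProj n R π δ -
        typicalProj n R π δ * tensorPow (fun _ : Fin n => ρ) * typicalProj n R π δ).PosSemidef := by
  have hπ := hdiag.mul_eq_ite
  rw [vnEntropy_eq_shannonEntropy hdiag]
  obtain ⟨hpsd, hidem, -, -, -, hρ, hR⟩ := hdiag
  have hsandwich : typicalProj n R π δ * tensorPow (fun _ : Fin n => ρ) * typicalProj n R π δ =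
      ∑ js ∈ typicalSet n R δ, ((∏ i, R (js i) : ℝ) : ℂ) • tensorPow fun i => π (js i) := by
    simp only [hρ, typicalProj_mul_tensorPow_mul_typicalProj hπ, Complex.ofReal_prod]
  rw [hsandwich, typicalProj]
  simp only [Finset.smul_sum, ← Finset.sum_sub_distrib, ← sub_smul, ← Complex.ofReal_sub]
  refine ⟨Matrix.posSemidef_sum _ fun js hjs => ?_, Matrix.posSemidef_sum _ fun js hjs => ?_⟩ <;>
    refine (posSemidef_tensorPow (fun j => (hpsd j).1) hidem js).smul
      (Complex.zero_le_real.mpr (sub_nonneg.mpr ?_))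
  exacts [by simpa using (prod_mem_Icc_of_mem_typicalSet hR hδ hjs).1,
    by simpa using (prod_mem_Icc_of_mem_typicalSet hR hδ hjs).2]

/-- **Lemma 2, part 2 (Typical projector, operator sandwich).** Writing `Π^n = Π^n_{ρ,δ}`,
`Π^n exp₂(−nH(ρ) − Kdδ√n) ≤ Π^n ρ^{⊗n} Π^n ≤ Π^n exp₂(−nH(ρ) + Kdδ√n)`
in the positive semidefinite order, with `K = 2 log₂(e)/e`. -/
theorem typicalProj_sandwich {d : ℕ} (ρ : Mat d) (hρ : IsState ρ)
    (R : Fin d → ℝ) (π : Fin d → Mat d) (hdiag : IsDiagonalization ρ R π)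
    (n : ℕ) (hn : 0 < n) (δ : ℝ) (hδ : 0 ≤ δ) :
    (typicalProj n R π δ * tensorPow (fun _ : Fin n => ρ) * typicalProj n R π δ -
        ((exp2 (-((n : ℝ) * vnEntropy ρ) - Kconst * d * δ * Real.sqrt n) : ℝ) : ℂ) •
          typicalProj n R π δ).PosSemidef ∧
      (((exp2 (-((n : ℝ) * vnEntropy ρ) + Kconst * d * δ * Real.sqrt n) : ℝ) : ℂ) •
          typicalProj n R π δ -
        typicalProj n R π δ * tensorPow (fun _ : Fin n => ρ) * typicalProj n R π δ).PosSemidef :=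
  typicalProj_sandwich_general ρ R π hdiag n δ hδ
end
end

section
/- Let W be a classical–quantum channel from a finite alphabet X with |X| = a into the density operators on ℂ^d. For every x^n ∈ X^n of type P and every δ > 0, the conditional variance-typical projector satisfies Tr(W_{x^n} · Π^n_{W,δ}(x^n)) ≥ 1 − ad/δ². -/
open Matrix BigOperators Finset
open scoped Classical ComplexOrder

noncomputable section

/-! Since `Tr(W_x π_{x,k}) = q_x(k)`, the trace of `W_{x^n}` against the product projector
indexed by `js` is the product weight `∏ i, q (xs i) (js i)`, so the trace in question is the
probability of the conditional typical set. A sequence `js` is atypical only if, for some letter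
`x` and eigenvalue index `k`, the number of positions of the block `I_x` carrying `k` deviates
from its mean `N(x|x^n) q_x(k)` by more than `δ` standard deviations. That count is a sum of
independent Bernoulli variables, so Chebyshev's inequality bounds each of these `a d` events by
`1/δ²`, and the union bound concludes. -/

theorem sum_filter_lt_abs_le_one_div_sq {α : Type*} [Fintype α] {p f : α → ℝ}
    (hp : ∀ a, 0 ≤ p a) {t δ : ℝ} (ht : 0 ≤ t) (hδ : 0 < δ)
    (hvar : ∑ a, p a * f a ^ 2 ≤ t ^ 2) :
    ∑ a ∈ univ.filter (fun a => δ * t < |f a|), p a ≤ 1 / δ ^ 2 := by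
  set bad := univ.filter (fun a => δ * t < |f a|)
  have hsq {a} (ha : a ∈ bad) : (δ * t) ^ 2 < f a ^ 2 := by
    rw [← sq_abs (f a)]
    exact pow_lt_pow_left₀ (mem_filter.1 ha).2 (by positivity) two_ne_zero
  have hbad : ∑ a ∈ bad, p a * f a ^ 2 ≤ t ^ 2 :=
    (sum_le_sum_of_subset_of_nonneg (subset_univ _)
      fun a _ _ => mul_nonneg (hp a) (sq_nonneg _)).trans hvar
  rcases ht.eq_or_lt with rfl | htpos
  · have hzero : ∀ a ∈ bad, p a = 0 := by
      intro a ha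
      have := (single_le_sum (fun b _ => mul_nonneg (hp b) (sq_nonneg (f b))) ha).trans hbad
      nlinarith [hsq ha, hp a]
    rw [sum_eq_zero hzero]
    positivity
  · have : (δ * t) ^ 2 * ∑ a ∈ bad, p a ≤ t ^ 2 := by
      rw [mul_sum]
      refine (sum_le_sum fun a ha => ?_).trans hbad
      nlinarith [hsq ha, hp a]
    rw [le_div_iff₀ (by positivity)]
    nlinarith [pow_pos htpos 2]

theorem sum_filter_exists_le_sum {α J : Type*} [Fintype α] [Fintype J] {p : α → ℝ}
    (hp : ∀ a, 0 ≤ p a) (B : J → α → Prop) [∀ j, DecidablePred (B j)] :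
    ∑ a ∈ univ.filter (fun a => ∃ j, B j a), p a ≤ ∑ j, ∑ a ∈ univ.filter (B j), p a := by
  have hterm (a : α) (j : J) : 0 ≤ if B j a then p a else 0 := ite_nonneg (hp a) le_rfl
  simp only [sum_filter]
  rw [sum_comm]
  refine sum_le_sum fun a _ => ?_
  split_ifs with h
  · obtain ⟨j, hj⟩ := h
    calc p a = if B j a then p a else 0 := (if_pos hj).symm
      _ ≤ _ := single_le_sum (fun j _ => hterm a j) (mem_univ j)
  · exact sum_nonneg fun j _ => hterm a j

section ProductWeights

variable {ι β : Type*} [Fintype ι] [DecidableEq ι] [Fintype β] {w : ι → β → ℝ}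

theorem sum_prod_mul_prod_eq_prod_sum (w f : ι → β → ℝ) :
    ∑ js : ι → β, (∏ i, w i (js i)) * ∏ i, f i (js i) = ∏ i, ∑ b, w i b * f i b := by
  simp only [← prod_mul_distrib, Fintype.prod_sum]

theorem sum_prod_eq_one (hw : ∀ i, ∑ b, w i b = 1) : ∑ js : ι → β, ∏ i, w i (js i) = 1 := by
  simp [← Fintype.prod_sum, hw]

theorem sum_prod_mul_sq_sum_eq (hw : ∀ i, ∑ b, w i b = 1) {c : ι → β → ℝ}
    (hc : ∀ i, ∑ b, w i b * c i b = 0) :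
    ∑ js : ι → β, (∏ i, w i (js i)) * (∑ i, c i (js i)) ^ 2 = ∑ i, ∑ b, w i b * c i b ^ 2 := by
  set F : ι → ι → ι → β → ℝ := fun i j l b =>
    (if l = i then c l b else 1) * (if l = j then c l b else 1)
  -- `c i (js i) * c j (js j)` is a product over coordinates, so its mean factors
  have pair (i j : ι) (js : ι → β) : c i (js i) * c j (js j) = ∏ l, F i j l (js l) := by
    rw [prod_mul_distrib, prod_ite_eq' univ i, prod_ite_eq' univ j]
    simp
  simp_rw [sq, sum_mul_sum, mul_sum, pair]
  rw [sum_comm]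
  refine sum_congr rfl fun i _ => ?_
  rw [sum_comm, sum_eq_single i]
  · rw [sum_prod_mul_prod_eq_prod_sum w (F i i), prod_eq_single i]
    · simp [F]
    · intro l _ hli
      simp [F, hli, hw]
    · simp
  · intro j _ hji
    rw [sum_prod_mul_prod_eq_prod_sum w (F i j)]
    exact prod_eq_zero (mem_univ i) (by simp [F, Ne.symm hji, hc])
  · simp

theorem sum_prod_mul_sq_card_sub_eq (hw : ∀ i, ∑ b, w i b = 1) {E : ι → Finset β}
    {m : ι → ℝ} (hm : ∀ i, ∑ b ∈ E i, w i b = m i) :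
    ∑ js : ι → β, (∏ i, w i (js i)) * ((#{i | js i ∈ E i} : ℝ) - ∑ i, m i) ^ 2
      = ∑ i, m i * (1 - m i) := by
  set c : ι → β → ℝ := fun i b => (if b ∈ E i then 1 else 0) - m i
  have hmean (i : ι) : ∑ b, w i b * (if b ∈ E i then 1 else 0) = m i := by
    simp [← hm]
  have hsum (js : ι → β) : ∑ i, c i (js i) = (#{i | js i ∈ E i} : ℝ) - ∑ i, m i := by
    simp [c, sum_sub_distrib, sum_boole]
  have hc (i : ι) : ∑ b, w i b * c i b = 0 := by
    simp only [c, mul_sub, sum_sub_distrib, hmean, ← sum_mul, hw, one_mul, sub_self]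
  have hc2 (i : ι) : ∑ b, w i b * c i b ^ 2 = m i * (1 - m i) := by
    have (b : β) : w i b * c i b ^ 2
        = w i b * (if b ∈ E i then 1 else 0) * (1 - 2 * m i) + w i b * m i ^ 2 := by
      by_cases hb : b ∈ E i <;> simp [c, hb]; ring
    simp only [this, sum_add_distrib, ← sum_mul, hmean, hw]
    ring
  simp only [← hsum, sum_prod_mul_sq_sum_eq hw hc, hc2]

theorem sum_filter_card_deviation_le (hw0 : ∀ i b, 0 ≤ w i b) (hw : ∀ i, ∑ b, w i b = 1)
    {E : ι → Finset β} {m : ι → ℝ} (hm : ∀ i, ∑ b ∈ E i, w i b = m i) {δ : ℝ} (hδ : 0 < δ) :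
    ∑ js ∈ univ.filter (fun js : ι → β =>
        δ * √(∑ i, m i * (1 - m i)) < |(#{i | js i ∈ E i} : ℝ) - ∑ i, m i|),
      ∏ i, w i (js i) ≤ 1 / δ ^ 2 := by
  have hp (js : ι → β) : 0 ≤ ∏ i, w i (js i) := prod_nonneg fun i _ => hw0 i (js i)
  have hvar := sum_prod_mul_sq_card_sub_eq hw hm
  have hvar_nonneg : 0 ≤ ∑ i, m i * (1 - m i) :=
    hvar ▸ sum_nonneg fun js _ => mul_nonneg (hp js) (sq_nonneg _)
  exact sum_filter_lt_abs_le_one_div_sq hp (Real.sqrt_nonneg _) hδ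
    (by rw [Real.sq_sqrt hvar_nonneg, hvar])

end ProductWeights

theorem trace_tensorPow_mul_tensorPow {d n : ℕ} (A B : Fin n → Mat d) :
    trace (tensorPow A * tensorPow B) = ∏ i, trace (A i * B i) := by
  simp only [trace, Matrix.diag, mul_apply, tensorPow, of_apply, ← prod_mul_distrib,
    Fintype.prod_sum]

section Diagonalization

variable {d : ℕ} {ρ : Mat d} {R : Fin d → ℝ} {π : Fin d → Mat d}

theorem IsDiagonalization.isProbDist (h : IsDiagonalization ρ R π) : IsProbDist R :=
  h.2.2.2.2.2.2

theorem IsDiagonalization.trace_mul_eq (h : IsDiagonalization ρ R π) (k : Fin d) :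
    trace (ρ * π k) = R k := by
  obtain ⟨-, hidem, htr, horth, -, rfl, -⟩ := h
  rw [sum_mul, trace_sum, Finset.sum_eq_single k]
  · rw [smul_mul, hidem, trace_smul, htr, smul_eq_mul, mul_one]
  · intro j _ hjk
    rw [smul_mul, horth j k hjk, smul_zero, trace_zero]
  · simp

end Diagonalization

theorem trace_tensorPow_mul_condTypicalProj {X : Type*} [Fintype X] {d n : ℕ}
    {W : X → Mat d} {q : X → Fin d → ℝ} {π : X → Fin d → Mat d}
    (hdiag : ∀ x, IsDiagonalization (W x) (q x) (π x)) (xs : Fin n → X) (δ : ℝ) :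
    trace (tensorPow (fun i => W (xs i)) * condTypicalProj xs q π δ)
      = ((∑ js ∈ condTypicalSet xs q δ, ∏ i, q (xs i) (js i) : ℝ) : ℂ) := by
  simp only [condTypicalProj, mul_sum, trace_sum, trace_tensorPow_mul_tensorPow,
    (hdiag _).trace_mul_eq]
  push_cast
  rfl

theorem sum_ite_eq_countIn_mul {X : Type*} {n : ℕ} (xs : Fin n → X) (x : X) (r : ℝ) :
    ∑ i, (if xs i = x then r else 0) = countIn x xs * r := by
  rw [← sum_filter, sum_const, nsmul_eq_mul, countIn]

theorem sum_prod_filter_block_deviation_le {X : Type*} {d n : ℕ} {q : X → Fin d → ℝ}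
    (hq : ∀ x, IsProbDist (q x)) (xs : Fin n → X)
    (x : X) (k : Fin d) {δ : ℝ} (hδ : 0 < δ) :
    ∑ js ∈ univ.filter (fun js : Fin n → Fin d =>
        δ * √(countIn x xs) * √(q x k * (1 - q x k))
          < |(#{i | xs i = x ∧ js i = k} : ℝ) - countIn x xs * q x k|),
      ∏ i, q (xs i) (js i) ≤ 1 / δ ^ 2 := by
  set m : Fin n → ℝ := fun i => if xs i = x then q x k else 0
  have hm (i : Fin n) : ∑ b ∈ univ.filter (fun b => xs i = x ∧ b = k), q (xs i) b = m i := by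
    by_cases h : xs i = x <;> simp [m, h, filter_eq']
  have hmean : ∑ i, m i = countIn x xs * q x k := sum_ite_eq_countIn_mul xs x _
  have hvar : ∑ i, m i * (1 - m i) = countIn x xs * (q x k * (1 - q x k)) := by
    rw [← sum_ite_eq_countIn_mul]
    exact sum_congr rfl fun i _ => by by_cases h : xs i = x <;> simp [m, h]
  have := sum_filter_card_deviation_le (fun _ => (hq _).1) (fun _ => (hq _).2) hm hδ
  simpa [hmean, hvar, Real.sqrt_mul (Nat.cast_nonneg _), mul_assoc] using this

theorem one_sub_le_sum_condTypicalSet {X : Type*} [Fintype X] {d n : ℕ} {q : X → Fin d → ℝ}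
    (hq : ∀ x, IsProbDist (q x)) (xs : Fin n → X) {δ : ℝ} (hδ : 0 < δ) :
    1 - (Fintype.card X : ℝ) * d / δ ^ 2
      ≤ ∑ js ∈ condTypicalSet xs q δ, ∏ i, q (xs i) (js i) := by
  have hp (js : Fin n → Fin d) : 0 ≤ ∏ i, q (xs i) (js i) :=
    prod_nonneg fun i _ => (hq _).1 _
  have hcompl : univ \ condTypicalSet xs q δ = univ.filter fun js => ∃ xk : X × Fin d,
      δ * √(countIn xk.1 xs) * √(q xk.1 xk.2 * (1 - q xk.1 xk.2))
        < |(#{i | xs i = xk.1 ∧ js i = xk.2} : ℝ) - countIn xk.1 xs * q xk.1 xk.2| := by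
    ext js
    simp [condTypicalSet]
  have hatypical : ∑ js ∈ univ \ condTypicalSet xs q δ, ∏ i, q (xs i) (js i)
      ≤ (Fintype.card X : ℝ) * d / δ ^ 2 := by
    rw [hcompl]
    refine (sum_filter_exists_le_sum hp _).trans ?_
    refine (sum_le_sum fun xk _ => sum_prod_filter_block_deviation_le hq xs xk.1 xk.2 hδ).trans ?_
    simp [div_eq_mul_inv]
  have htotal := sum_sdiff (f := fun js => ∏ i, q (xs i) (js i))
    (subset_univ (condTypicalSet xs q δ))
  rw [sum_prod_eq_one fun i => (hq _).2] at htotal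
  linarith

theorem condTypicalProj_trace_channel_general {X : Type} [Fintype X] {d : ℕ}
    (W : X → Mat d)
    (q : X → Fin d → ℝ) (π : X → Fin d → Mat d)
    (hdiag : ∀ x, IsDiagonalization (W x) (q x) (π x))
    (n : ℕ) (xs : Fin n → X)
    (δ : ℝ) (hδ : 0 < δ) :
    1 - (Fintype.card X : ℝ) * d / δ ^ 2
      ≤ (Matrix.trace (tensorPow (fun i => W (xs i)) * condTypicalProj xs q π δ)).re := by
  rw [trace_tensorPow_mul_condTypicalProj hdiag, Complex.ofReal_re]
  exact one_sub_le_sum_condTypicalSet (fun x => (hdiag x).isProbDist) xs hδ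

/-- **Lemma 4, part 1 (Conditional typical projector, trace).** For `x^n` of type `P`,
`Tr(W_{x^n} Π^n_{W,δ}(x^n)) ≥ 1 − ad/δ²`. -/
theorem condTypicalProj_trace_channel {X : Type} [Fintype X] {d : ℕ}
    (W : X → Mat d) (hW : ∀ x, IsState (W x))
    (q : X → Fin d → ℝ) (π : X → Fin d → Mat d)
    (hdiag : ∀ x, IsDiagonalization (W x) (q x) (π x))
    (n : ℕ) (hn : 0 < n) (xs : Fin n → X) (P : X → ℝ) (hP : IsProbDist P)
    (htype : ∀ x, (countIn x xs : ℝ) = n * P x)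
    (δ : ℝ) (hδ : 0 < δ) :
    1 - (Fintype.card X : ℝ) * d / δ ^ 2
      ≤ (Matrix.trace (tensorPow (fun i => W (xs i)) * condTypicalProj xs q π δ)).re :=
  condTypicalProj_trace_channel_general W q π hdiag n xs δ hδ
end
end
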